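/- For the simplex system on ℝ^n with coefficient matrix (a_ij), suppose there is M with 0 ≤ M < 1 and a_ij ≤ M for all i, j. Then: (i) for every x ∈ ℝ^n, the inner product ⟨x, f(x)⟩ ≤ |x|²(1 − (1 − M)|x|²); and (ii) for every R with R² ≥ 1/(1 − M), the closed ball of radius R is positively invariant, i.e. every differentiable solution x : [0, ∞) → ℝ^n of x'(t) = f(x(t)) with |x(0)| ≤ R satisfies |x(t)| ≤ R for all t ≥ 0. -/

import Mathlib

/-! Since `a i j ≤ M`, the derivative of `u = ‖x‖²` along a solution is at most `2u(1 - (1 - M)u)`.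
This concave parabola lies below its tangent line at `u = R²`, which is `≤ 0` there because
`(1 - M)R² ≥ 1`; so `u - R²` satisfies a linear differential inequality with zero initial bound,
and Grönwall's inequality keeps `u ≤ R²`. -/

open scoped BigOperators RealInnerProductSpace

/-- The simplex system vector field on `ℝ^n` with coefficient matrix `a`:
`f_j(x) = x_j (1 - ∑ i, x_i² + ∑ i, a i j * x_i²)`. -/
noncomputable def simplexField {n : ℕ} (a : Fin n → Fin n → ℝ)
    (x : EuclideanSpace ℝ (Fin n)) : EuclideanSpace ℝ (Fin n) :=
  WithLp.toLp 2 (fun j => x j * (1 - ∑ i, (x i) ^ 2 + ∑ i, a i j * (x i) ^ 2))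

open Set

theorem inner_simplexField {n : ℕ} (a : Fin n → Fin n → ℝ) (x : EuclideanSpace ℝ (Fin n)) :
    ⟪x, simplexField a x⟫ = ∑ j, x j ^ 2 * (1 - ‖x‖ ^ 2 + ∑ i, a i j * x i ^ 2) := by
  rw [PiLp.inner_apply, EuclideanSpace.real_norm_sq_eq]
  refine Finset.sum_congr rfl fun j _ => ?_
  simp only [simplexField, RCLike.inner_apply, conj_trivial]
  ring

theorem inner_simplexField_le {n : ℕ} (a : Fin n → Fin n → ℝ) (M : ℝ)
    (ha : ∀ i j, a i j ≤ M) (x : EuclideanSpace ℝ (Fin n)) :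
    ⟪x, simplexField a x⟫ ≤ ‖x‖ ^ 2 * (1 - (1 - M) * ‖x‖ ^ 2) := by
  have hcoeff (j : Fin n) : ∑ i, a i j * x i ^ 2 ≤ M * ‖x‖ ^ 2 := by
    rw [EuclideanSpace.real_norm_sq_eq, Finset.mul_sum]
    exact Finset.sum_le_sum fun i _ => mul_le_mul_of_nonneg_right (ha i j) (sq_nonneg _)
  calc ⟪x, simplexField a x⟫
      ≤ ∑ j, x j ^ 2 * (1 - ‖x‖ ^ 2 + M * ‖x‖ ^ 2) := by
        rw [inner_simplexField]
        gcongr with j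
        exact hcoeff j
    _ = ‖x‖ ^ 2 * (1 - (1 - M) * ‖x‖ ^ 2) := by
        rw [← Finset.sum_mul, ← EuclideanSpace.real_norm_sq_eq]
        ring

/-- The parabola `u ↦ 2u(1 - bu)` lies below its tangent line at `c`, whose value at `c` is
`2c(1 - bc) ≤ 0`. -/
theorem two_mul_mul_one_sub_le_tangent {b c : ℝ} (hb : 0 ≤ b) (hbc : 1 ≤ b * c) (u : ℝ) :
    2 * (u * (1 - b * u)) ≤ (2 - 4 * b * c) * (u - c) := by
  have hc : 0 ≤ c := by nlinarith
  nlinarith [mul_nonneg hb (sq_nonneg (u - c)), mul_nonneg hc (sub_nonneg.2 hbc)]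

theorem le_of_hasDerivWithinAt_le_mul_sub {g g' : ℝ → ℝ} {a K c : ℝ}
    (hg : ∀ t ∈ Ici a, HasDerivWithinAt g (g' t) (Ici a) t)
    (hbound : ∀ t ∈ Ici a, g' t ≤ K * (g t - c)) (ha : g a ≤ c) :
    ∀ t ≥ a, g t ≤ c := by
  intro t ht
  have hgron := le_gronwallBound_of_liminf_deriv_right_le (f := fun s => g s - c) (δ := 0)
    (ε := 0) (K := K) (b := t)
    (fun s hs => ((hg s hs.1).continuousWithinAt.mono Icc_subset_Ici_self).sub_const c)
    (fun s hs _ hr => (((hg s hs.1).mono (Ici_subset_Ici.2 hs.1)).sub_const c).liminf_right_slope_le hr)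
    (sub_nonpos.2 ha) (fun s hs => by simpa using hbound s hs.1) t ⟨ht, le_rfl⟩
  rw [gronwallBound_ε0_δ0] at hgron
  linarith

theorem stmt7_general {n : ℕ} (a : Fin n → Fin n → ℝ) (M : ℝ)
    (hM1 : M < 1) (ha : ∀ i j : Fin n, a i j ≤ M) :
    (∀ x : EuclideanSpace ℝ (Fin n),
        ⟪x, simplexField a x⟫ ≤ ‖x‖ ^ 2 * (1 - (1 - M) * ‖x‖ ^ 2)) ∧
    (∀ R : ℝ, 1 / (1 - M) ≤ R ^ 2 →
        ∀ x : ℝ → EuclideanSpace ℝ (Fin n),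
          (∀ t ∈ Set.Ici (0 : ℝ),
            HasDerivWithinAt x (simplexField a (x t)) (Set.Ici (0 : ℝ)) t) →
          ‖x 0‖ ≤ R → ∀ t ≥ (0 : ℝ), ‖x t‖ ≤ R) := by
  refine ⟨inner_simplexField_le a M ha, fun R hR x hx hx0 t ht => ?_⟩
  have hb : 0 < 1 - M := sub_pos.2 hM1
  have hbR : 1 ≤ (1 - M) * R ^ 2 := by rwa [div_le_iff₀ hb, mul_comm] at hR
  have hsq : ‖x t‖ ^ 2 ≤ R ^ 2 :=
    le_of_hasDerivWithinAt_le_mul_sub (fun s hs => (hx s hs).norm_sq)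
      (fun s _ => (mul_le_mul_of_nonneg_left (inner_simplexField_le a M ha (x s)) zero_le_two).trans
        (two_mul_mul_one_sub_le_tangent hb.le hbR _))
      (pow_le_pow_left₀ (norm_nonneg _) hx0 2) t ht
  exact le_of_sq_le_sq hsq ((norm_nonneg _).trans hx0)

/-- If all coefficients satisfy `a i j ≤ M` with `0 ≤ M < 1`, then
(i) `⟨x, f(x)⟩ ≤ |x|² (1 - (1 - M)|x|²)` for all `x`, and
(ii) every closed ball of radius `R` with `R² ≥ 1/(1-M)` is positively invariant for
the simplex system. -/
theorem stmt7 {n : ℕ} (a : Fin n → Fin n → ℝ) (M : ℝ)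
    (hM0 : 0 ≤ M) (hM1 : M < 1) (ha : ∀ i j : Fin n, a i j ≤ M) :
    (∀ x : EuclideanSpace ℝ (Fin n),
        ⟪x, simplexField a x⟫ ≤ ‖x‖ ^ 2 * (1 - (1 - M) * ‖x‖ ^ 2)) ∧
    (∀ R : ℝ, 1 / (1 - M) ≤ R ^ 2 →
        ∀ x : ℝ → EuclideanSpace ℝ (Fin n),
          (∀ t ∈ Set.Ici (0 : ℝ),
            HasDerivWithinAt x (simplexField a (x t)) (Set.Ici (0 : ℝ)) t) →
          ‖x 0‖ ≤ R → ∀ t ≥ (0 : ℝ), ‖x t‖ ≤ R) :=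
  stmt7_general a M hM1 ha
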